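/- arXiv:2509.10868 — 2 statements merged into one kernel-verified Lean document; each statement's English description precedes it below -/
import Mathlib

section
/- Let f = (a₁,…,a_r) ∈ F_r with r ≥ 1, set a = a_r and let f̄ = (a₁,…,a_{r−1}) ∈ F_{r−1}. Then the map sending g = (b₁,…,b_{r−1}) to h = (b₁,…,b_{r−1}, a) is a well-defined bijection from ♭f̄ onto ♭_{1/2} f = {g ∈ ♭f : D_cap(g) contains the cap joining a to a+1}. -/
open Finset

namespace KacCatalan

/-- A weight `f : ℤ → {×,·}` (with finitely many `×`) is encoded by the finite
set `f⁻¹(×) ⊆ ℤ`; membership `x ∈ f` means `f(x) = ×`. -/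
abbrev Weight := Finset ℤ

/-- `f` and `g` are equal up to shift, i.e. the entries of `f` are obtained from
those of `g` by adding a fixed constant. -/
def UpToShift (f g : Weight) : Prop := ∃ k : ℤ, f = g.image (fun x => x + k)

/-- The largest entry `a_r` of `f` (junk value `0` for `f = ∅`). -/
def maxD (f : Weight) : ℤ := f.max.getD 0

/-- The smallest entry `a₁` of `f` (junk value `0` for `f = ∅`). -/
def minD (f : Weight) : ℤ := f.min.getD 0

/-- The tally function `T_f : ℤ → ℤ`, the unique function with `T_f(a_r) = 1`
and `T_f(b+1) = T_f(b) + 1` if `f(b+1) = ×`, `T_f(b+1) = T_f(b) - 1` otherwise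
(given here in closed form). -/
noncomputable def tally (f : Weight) (b : ℤ) : ℤ :=
  1 + 2 * (((f ∩ Finset.Ioc (maxD f) b).card : ℤ) - ((f ∩ Finset.Ioc b (maxD f)).card : ℤ))
    - (b - maxD f)

/-- Any finite set of integers omits some integer of the form `a + 1 + n`. -/
theorem exists_free (T : Finset ℤ) (a : ℤ) : ∃ n : ℕ, a + 1 + (n : ℤ) ∉ T := by
  by_contra h
  push_neg at h
  have hinj : Function.Injective (fun n : ℕ => a + 1 + (n : ℤ)) := by
    intro m n hmn
    have : ((m : ℤ)) = (n : ℤ) := by simpa using hmn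
    exact_mod_cast this
  exact (Set.infinite_of_injective_forall_mem hinj (fun n => h n)) T.finite_toSet

/-- The end of the cap starting at `a`: the smallest integer greater than `a`
avoiding the (finite) forbidden set `T`. -/
def capEnd (T : Finset ℤ) (a : ℤ) : ℤ := a + 1 + (Nat.find (exists_free T a) : ℤ)

/-- Build the caps starting at the points of the given list (processed in order,
which will be right-to-left on the number line), where `S = f⁻¹(×)` and `used`
records the ends of the already-constructed caps.  A cap is encoded as a pair
`(start, end)` with `start < end`. -/
def buildCaps (S : Finset ℤ) : List ℤ → Finset ℤ → Finset (ℤ × ℤ)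
  | [], _ => ∅
  | a :: rest, used =>
      insert (a, capEnd (S ∪ used) a)
        (buildCaps S rest (insert (capEnd (S ∪ used) a) used))

/-- The cap diagram `D_cap(f)`: one cap starting at each entry of `f`,
constructed from right to left, each cap ending at the smallest integer greater
than its start that is not in `f⁻¹(×)` and not the end of an
already-constructed cap. -/
def Dcap (f : Weight) : Finset (ℤ × ℤ) :=
  buildCaps f ((f.sort (· ≤ ·)).reverse) ∅

/-- A set of caps `D` matches `f` if every cap of `D` joins an integer where
`f` takes the value `·` to an integer where `f` takes the value `×`. -/
def Matches (D : Finset (ℤ × ℤ)) (f : Weight) : Prop :=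
  ∀ c ∈ D, (c.1 ∈ f ∧ c.2 ∉ f) ∨ (c.1 ∉ f ∧ c.2 ∈ f)

/-- `♭f`: the set of `g ∈ F_r` (`r = #f`) such that `D_cap(g)` matches `f`. -/
def flat (f : Weight) : Set Weight :=
  {g | g.card = f.card ∧ Matches (Dcap g) f}

/-- `L^a_b f`: change the value of `f` at `a` from `×` to `·` and at `b`
from `·` to `×`. -/
def Lmove (f : Weight) (b a : ℤ) : Weight := insert b (f.erase a)

/-- The move `L^a_b f` is legal. -/
def IsLegal (f : Weight) (b a : ℤ) : Prop :=
  b < a ∧ b ∉ f ∧ a ∈ f ∧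
    (∀ x : ℤ, b ≤ x → x < a → 1 ≤ tally f a - tally f x) ∧
    tally f a - tally f b = 1

/-- `LM f = {i ∈ {1,…,r} : L^a_{a-1-2i} f is a legal move}`, where `a = a_r`. -/
def LM (f : Weight) : Set ℕ :=
  {i | 1 ≤ i ∧ i ≤ f.card ∧ IsLegal f (maxD f - 1 - 2 * (i : ℤ)) (maxD f)}

/-- `♭_{1/2} f`: those `g ∈ ♭f` whose cap diagram contains the cap joining
`a = a_r` to `a + 1`. -/
def flatHalf (f : Weight) : Set Weight :=
  {g | g ∈ flat f ∧ (maxD f, maxD f + 1) ∈ Dcap g}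

/-- `♭_i f = {L^a_{a-1-2i} h : h ∈ ♭_{1/2} f} ∩ ♭f`. -/
def flatI (f : Weight) (i : ℕ) : Set Weight :=
  ((fun h => Lmove h (maxD f - 1 - 2 * (i : ℤ)) (maxD f)) '' flatHalf f) ∩ flat f

/-- `max f`: integer points where `T_f` has a (strict) local maximum. -/
def maxSet (f : Weight) : Set ℤ :=
  {c | tally f (c - 1) < tally f c ∧ tally f (c + 1) < tally f c}

/-- `min f`: integer points where `T_f` has a (strict) local minimum. -/
def minSet (f : Weight) : Set ℤ :=
  {c | tally f c < tally f (c - 1) ∧ tally f c < tally f (c + 1)}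

/-- `f₊`: points where `T_f` increases on both sides. -/
def fplus (f : Weight) : Set ℤ :=
  {c | tally f c - tally f (c - 1) = 1 ∧ tally f (c + 1) - tally f c = 1}

/-- `f₋`: points where `T_f` decreases on both sides. -/
def fminus (f : Weight) : Set ℤ :=
  {c | tally f c - tally f (c - 1) = -1 ∧ tally f (c + 1) - tally f c = -1}

/-- `p = (2, 4, …, 2r)`. -/
noncomputable def pSet (r : ℕ) : Weight := (Finset.Icc (1 : ℤ) (r : ℤ)).image (fun x => 2 * x)

/-- `q = (1, 2, …, r)`. -/
noncomputable def qSet (r : ℕ) : Weight := Finset.Icc (1 : ℤ) (r : ℤ)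

end KacCatalan

/-!
`D_cap` is built from right to left, so when `a` lies right of every point of `g`, the diagram
`D_cap (g ∪ {a})` is the cap `(a, a + 1)` together with the caps of `D_cap g`, each end `≥ a`
moved two steps right, past the newly occupied `a` and `a + 1`. If `a` is the last `×` of `f`,
the cap `(a, a + 1)` matches `f`, and a cap of `D_cap g` matches `f̄` exactly when its moved
copy matches `f`: left of `a` the weights `f` and `f̄` agree, and an end `≥ a` is a `·` for `f̄`
before and for `f` after the move. Finally, a diagram matching `f` has no
point right of the last `×` of `f`, because its rightmost point carries a cap to its right
neighbour. This places every `g ∈ ♭f̄` left of `a`, and every `h ∈ ♭_{1/2} f` at or left of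
`a`, with `a ∈ h` as the start of the cap `(a, a + 1)`; so `h \ {a}` is its preimage.
-/

theorem Finset.sort_insert_of_forall_lt {α : Type*} [LinearOrder α] {s : Finset α} {a : α}
    (h : ∀ x ∈ s, x < a) : (insert a s).sort = s.sort ++ [a] := by
  have hl : (s.sort ++ [a]).toFinset = insert a s := by
    ext x; simp
  rw [← hl, List.toFinset_sort]
  · exact List.pairwise_append.2
      ⟨s.pairwise_sort _, by simp, fun x hx y hy => by
        rw [List.mem_singleton.1 hy]; exact (h x ((mem_sort _).1 hx)).le⟩
  · exact List.nodup_append.2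
      ⟨s.sort_nodup _, List.nodup_singleton a, fun x hx y hy => by
        rw [List.mem_singleton.1 hy]; exact (h x ((mem_sort _).1 hx)).ne⟩

namespace KacCatalan

theorem maxD_mem {f : Weight} (h : f.Nonempty) : maxD f ∈ f := by
  rw [maxD, ← coe_max' h]; exact f.max'_mem h

theorem le_maxD {f : Weight} {x : ℤ} (hx : x ∈ f) : x ≤ maxD f := by
  rw [maxD, ← coe_max' ⟨x, hx⟩]; exact f.le_max' x hx

section capEnd

theorem capEnd_notMem (T : Finset ℤ) (a : ℤ) : capEnd T a ∉ T :=
  Nat.find_spec (exists_free T a)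

theorem lt_capEnd (T : Finset ℤ) (a : ℤ) : a < capEnd T a := by
  unfold capEnd; omega

variable {T : Finset ℤ} {a : ℤ}

theorem mem_of_lt_capEnd {c : ℤ} (h₁ : a < c) (h₂ : c < capEnd T a) : c ∈ T := by
  have hc : a + 1 + ((c - a - 1).toNat : ℤ) = c := by omega
  have := Nat.find_min (exists_free T a) (m := (c - a - 1).toNat) (by unfold capEnd at h₂; omega)
  rwa [hc, not_not] at this

theorem capEnd_eq {e : ℤ} (h₁ : a < e) (h₂ : e ∉ T) (h₃ : ∀ c, a < c → c < e → c ∈ T) :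
    capEnd T a = e := by
  rcases lt_trichotomy (capEnd T a) e with h | h | h
  · exact absurd (h₃ _ (lt_capEnd T a) h) (capEnd_notMem T a)
  · exact h
  · exact absurd (mem_of_lt_capEnd h₁ h) h₂

theorem capEnd_eq_add_one (h : a + 1 ∉ T) : capEnd T a = a + 1 := by
  simp [capEnd, h]

end capEnd

section image

variable {φ : ℤ → ℤ} {R : Finset ℤ}

theorem capEnd_image (hφ : StrictMono φ) (hR : ∀ c, c ∈ R ↔ c ∉ Set.range φ) (T : Finset ℤ)
    {b : ℤ} (hb : φ b = b) : capEnd (R ∪ T.image φ) b = φ (capEnd T b) := by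
  apply capEnd_eq
  · simpa [hb] using hφ (lt_capEnd T b)
  · simp only [mem_union, mem_image, hR, Set.mem_range, not_or, not_not, exists_apply_eq_apply,
      true_and, not_exists, not_and, hφ.injective.eq_iff]
    exact fun x hx hxe => capEnd_notMem T b (hxe ▸ hx)
  · intro c hbc hce
    by_cases hc : c ∈ Set.range φ
    · obtain ⟨x, rfl⟩ := hc
      rw [← hb, hφ.lt_iff_lt] at hbc
      exact mem_union_right _ (mem_image_of_mem φ (mem_of_lt_capEnd hbc (hφ.lt_iff_lt.1 hce)))
    · exact mem_union_left _ ((hR c).2 hc)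

theorem buildCaps_image (hφ : StrictMono φ) (hR : ∀ c, c ∈ R ↔ c ∉ Set.range φ)
    {S S' : Finset ℤ} (L : List ℤ) (hL : ∀ b ∈ L, φ b = b) {used used' : Finset ℤ}
    (h : S' ∪ used' = R ∪ (S ∪ used).image φ) :
    buildCaps S' L used' = (buildCaps S L used).image (Prod.map id φ) := by
  induction L generalizing used used' with
  | nil => simp [buildCaps]
  | cons b L ih =>
    have hcap : capEnd (S' ∪ used') b = φ (capEnd (S ∪ used) b) := by
      rw [h, capEnd_image hφ hR _ (hL b List.mem_cons_self)]
    simp only [buildCaps, image_insert, hcap]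
    congr 2
    refine ih (fun x hx => hL x (List.mem_cons_of_mem b hx)) ?_
    rw [union_insert, h, union_insert, image_insert, union_insert]

end image

/-- Inserting a new rightmost cap `(a, a + 1)` pushes every cap end `≥ a` two steps right. -/
def shiftEnd (a e : ℤ) : ℤ := if e < a then e else e + 2

theorem strictMono_shiftEnd (a : ℤ) : StrictMono (shiftEnd a) := by
  intro x y h
  simp only [shiftEnd]
  split_ifs <;> omega

theorem mem_pair_iff_notMem_range_shiftEnd (a c : ℤ) :
    c ∈ ({a, a + 1} : Finset ℤ) ↔ c ∉ Set.range (shiftEnd a) := by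
  simp only [mem_insert, mem_singleton, Set.mem_range, not_exists, shiftEnd]
  constructor
  · rintro (rfl | rfl) x <;> split_ifs <;> omega
  · intro h
    by_contra hc
    rcases lt_or_ge c a with hca | hca
    · exact h c (if_pos hca)
    · exact h (c - 2) (by rw [if_neg (by omega)]; omega)

theorem Dcap_insert_of_forall_lt {g : Weight} {a : ℤ} (hg : ∀ x ∈ g, x < a) :
    Dcap (insert a g) = insert (a, a + 1) ((Dcap g).image (Prod.map id (shiftEnd a))) := by
  have hfix : ∀ x ∈ g, shiftEnd a x = x := fun x hx => if_pos (hg x hx)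
  have ha : capEnd (insert a g ∪ ∅) a = a + 1 :=
    capEnd_eq_add_one (by simpa using fun h => (hg _ h).not_ge (by omega))
  rw [Dcap, Finset.sort_insert_of_forall_lt hg, List.reverse_append]
  simp only [List.reverse_singleton, List.singleton_append, buildCaps, ha]
  congr 1
  refine buildCaps_image (strictMono_shiftEnd a) (mem_pair_iff_notMem_range_shiftEnd a) _
    (fun x hx => hfix x (by simpa using hx)) ?_
  rw [union_empty, image_congr hfix, image_id', insert_empty, insert_union, union_comm,
    ← insert_union]

theorem mem_Dcap_insert_of_forall_lt {g : Weight} {a : ℤ} (hg : ∀ x ∈ g, x < a) :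
    (a, a + 1) ∈ Dcap (insert a g) := by
  rw [Dcap_insert_of_forall_lt hg]
  exact mem_insert_self _ _

theorem fst_mem_of_mem_Dcap {g : Weight} {c : ℤ × ℤ} (h : c ∈ Dcap g) : c.1 ∈ g := by
  suffices ∀ L used, c ∈ buildCaps g L used → c.1 ∈ L by simpa using this _ _ h
  intro L
  induction L with
  | nil => simp [buildCaps]
  | cons b L ih =>
    intro used hc
    rcases mem_insert.1 hc with rfl | hc
    · exact List.mem_cons_self
    · exact List.mem_cons_of_mem b (ih _ hc)

theorem forall_le_of_matches_Dcap {g f : Weight} {c : ℤ} (hM : Matches (Dcap g) f)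
    (hf : ∀ y ∈ f, y ≤ c) : ∀ x ∈ g, x ≤ c := by
  rcases g.eq_empty_or_nonempty with rfl | hne
  · simp
  set b := g.max' hne
  have hcap : (b, b + 1) ∈ Dcap g := by
    simpa [insert_erase (g.max'_mem hne)] using
      mem_Dcap_insert_of_forall_lt (fun x hx => g.lt_max'_of_mem_erase_max' hne hx)
  have hbc : b ≤ c := by
    rcases hM _ hcap with ⟨hb, -⟩ | ⟨-, hb⟩
    · exact hf _ hb
    · linarith [hf _ hb]
  exact fun x hx => (g.le_max' x hx).trans hbc

theorem matches_Dcap_insert_iff {f g : Weight} {a : ℤ} (hg : ∀ x ∈ g, x < a) (haf : a ∈ f)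
    (hfa : ∀ x ∈ f, x ≤ a) : Matches (Dcap (insert a g)) f ↔ Matches (Dcap g) (f.erase a) := by
  have hcap : (a ∈ f ∧ a + 1 ∉ f) ∨ (a ∉ f ∧ a + 1 ∈ f) :=
    Or.inl ⟨haf, fun h => by linarith [hfa _ h]⟩
  simp only [Matches, Dcap_insert_of_forall_lt hg, forall_mem_insert, hcap, true_and,
    forall_mem_image, Prod.forall, Prod.map_apply, id_eq]
  refine forall₂_congr fun s e => forall_congr' fun hse => ?_
  have hs : s < a := hg s (fst_mem_of_mem_Dcap hse)
  have hnot : ∀ x, a < x → x ∉ f := fun x hx h => by linarith [hfa x h]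
  by_cases hea : e < a
  · simp [shiftEnd, hea, mem_erase, hs.ne, hea.ne]
  · have he : e ∉ f.erase a := fun h =>
      hnot e (lt_of_le_of_ne (not_lt.1 hea) (ne_of_mem_erase h).symm) (mem_of_mem_erase h)
    simp [shiftEnd, hea, he, hnot (e + 2) (by omega), mem_erase, hs.ne]

theorem insert_mem_flat_iff {f g : Weight} {a : ℤ} (hg : ∀ x ∈ g, x < a) (haf : a ∈ f)
    (hfa : ∀ x ∈ f, x ≤ a) : insert a g ∈ flat f ↔ g ∈ flat (f.erase a) := by
  have hag : a ∉ g := fun h => (hg a h).false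
  simp only [flat, Set.mem_ofPred_eq, matches_Dcap_insert_iff hg haf hfa,
    card_insert_of_notMem hag, ← card_erase_add_one haf, add_left_inj]

/-- **Lemma 1.** For `f = (a₁,…,a_r)`, `a = a_r` and `f̄ = (a₁,…,a_{r-1})`, the
map `g = (b₁,…,b_{r-1}) ↦ h = (b₁,…,b_{r-1},a)` is a bijection from `♭f̄` onto
`♭_{1/2} f`. -/
theorem bijOn_flatHalf (r : ℕ) (hr : 1 ≤ r) (f : Weight) (hf : f.card = r) :
    Set.BijOn (fun g => insert (maxD f) g) (flat (f.erase (maxD f))) (flatHalf f) := by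
  have hne : f.Nonempty := card_pos.1 (by omega)
  set a := maxD f
  have haf : a ∈ f := maxD_mem hne
  have hfa : ∀ x ∈ f, x ≤ a := fun x => le_maxD
  have lt_of_mem_erase : ∀ s : Weight, (∀ x ∈ s, x ≤ a) → ∀ x ∈ s.erase a, x < a :=
    fun s hs x hx => lt_of_le_of_ne (hs x (mem_of_mem_erase hx)) (ne_of_mem_erase hx)
  have hlt : ∀ g ∈ flat (f.erase a), ∀ x ∈ g, x < a := fun g hg x hx =>
    Int.lt_of_le_sub_one <| forall_le_of_matches_Dcap hg.2
      (fun y hy => Int.le_sub_one_of_lt (lt_of_mem_erase f hfa y hy)) x hx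
  refine Set.InvOn.bijOn (f' := fun h => h.erase a)
    ⟨fun g hg => erase_insert (fun h => (hlt g hg a h).false),
      fun h hh => insert_erase (fst_mem_of_mem_Dcap hh.2)⟩
    (fun g hg => ⟨(insert_mem_flat_iff (hlt g hg) haf hfa).2 hg,
      mem_Dcap_insert_of_forall_lt (hlt g hg)⟩) ?_
  intro h ⟨hh, hcap⟩
  have hlt' := lt_of_mem_erase h (forall_le_of_matches_Dcap hh.2 hfa)
  refine (insert_mem_flat_iff hlt' haf hfa).1 ?_
  rwa [insert_erase (fst_mem_of_mem_Dcap hcap)]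

end KacCatalan
end

section
/- Let r ≥ 1 and let p = (2, 4, …, 2r) ∈ F_r (so p⁻¹(×) = {2, 4, …, 2r}). Then |♭p| = C_{r+1}. -/
open Finset

/-!
Read `g` as the lattice path `height g` that steps up at the points of `g` and down at every
other integer. The cap of `D_cap(g)` starting at `a ∈ g` ends at `firstDrop g a`, the first point
right of `a` where the path drops below its height at `a`: `D_cap(g)` is the usual matching of
up-steps with down-steps. The two ends of a cap have opposite parities, so `D_cap(g)` matches
`p = (2, 4, …, 2r)` iff the even end of every cap lies in `[2, 2r]`. The even ends are distinct,
so counting the points of `g` beyond `2t` against the `r - t` points of `p` there shows that, for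
`#g = r`, this holds exactly when `g ⊆ [1, 2r]` and the path never goes below `-1` on `[0, 2r]`.
Framed by an up-step and a down-step, these paths are the Dyck paths of semilength `r + 1`,
counted by `C_{r+1}`.
-/

namespace KacCatalan

def height (g : Finset ℤ) (x : ℤ) : ℤ := 2 * #{y ∈ g | y ≤ x} - x

section Height

variable {g : Finset ℤ} {x : ℤ}

lemma card_filter_le_eq_sub_one_add (g : Finset ℤ) (x : ℤ) :
    #{y ∈ g | y ≤ x} = #{y ∈ g | y ≤ x - 1} + if x ∈ g then 1 else 0 := by
  have hsplit : ({y ∈ g | y ≤ x} : Finset ℤ) = {y ∈ g | y ≤ x - 1} ∪ {y ∈ g | y = x} := by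
    ext y
    simp only [mem_union, mem_filter, ← and_or_left]
    exact and_congr_right fun _ => by omega
  rw [hsplit, card_union_of_disjoint (disjoint_filter.2 fun _ _ h h' => by omega), filter_eq']
  split_ifs <;> simp

lemma height_of_mem (h : x ∈ g) : height g x = height g (x - 1) + 1 := by
  simp only [height, card_filter_le_eq_sub_one_add g x, if_pos h]
  push_cast
  ring

lemma height_of_notMem (h : x ∉ g) : height g x = height g (x - 1) - 1 := by
  simp only [height, card_filter_le_eq_sub_one_add g x, if_neg h]
  push_cast
  ring

lemma height_sub_one_eq (g : Finset ℤ) (x : ℤ) :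
    height g (x - 1) = height g x - 1 ∨ height g (x - 1) = height g x + 1 := by
  by_cases h : x ∈ g
  · exact .inl (by rw [height_of_mem h]; ring)
  · exact .inr (by rw [height_of_notMem h]; ring)

lemma height_add_emod_two (g : Finset ℤ) (x : ℤ) : (height g x + x) % 2 = 0 := by
  simp [height]

lemma height_le (g : Finset ℤ) (x : ℤ) : height g x ≤ 2 * #g - x := by
  have : #{y ∈ g | y ≤ x} ≤ #g := card_filter_le _ _
  simp only [height]
  omega

end Height

lemma exists_height_lt (g : Finset ℤ) (a : ℤ) : ∃ n : ℕ, height g (a + 1 + n) < height g a := by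
  refine ⟨(2 * #g - height g a - a).toNat, ?_⟩
  have := height_le g (a + 1 + (2 * #g - height g a - a).toNat)
  omega

lemma add_one_add_find_eq {P : ℤ → Prop} [DecidablePred P] {a b : ℤ}
    (h : ∃ n : ℕ, P (a + 1 + n)) (hab : a < b) (hb : P b) (hmin : ∀ x, a < x → x < b → ¬ P x) :
    a + 1 + (Nat.find h : ℤ) = b := by
  have hle : Nat.find h ≤ (b - a - 1).toNat :=
    Nat.find_min' h (by rwa [show a + 1 + ((b - a - 1).toNat : ℤ) = b by omega])
  by_contra hne
  exact hmin _ (by omega) (by omega) (Nat.find_spec h)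

def firstDrop (g : Finset ℤ) (a : ℤ) : ℤ := a + 1 + Nat.find (exists_height_lt g a)

section FirstDrop

variable (g : Finset ℤ) (a : ℤ) {b x : ℤ}

lemma lt_firstDrop : a < firstDrop g a := by
  simp only [firstDrop]
  omega

lemma height_firstDrop_lt : height g (firstDrop g a) < height g a :=
  Nat.find_spec (exists_height_lt g a)

variable {g a} in
lemma height_le_of_lt_firstDrop (hax : a ≤ x) (hx : x < firstDrop g a) :
    height g a ≤ height g x := by
  obtain rfl | hax := hax.eq_or_lt
  · exact le_rfl
  have hfind : (x - a - 1).toNat < Nat.find (exists_height_lt g a) := by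
    simp only [firstDrop] at hx
    omega
  have := Nat.find_min (exists_height_lt g a) hfind
  rwa [show a + 1 + ((x - a - 1).toNat : ℤ) = x by omega, not_lt] at this

lemma height_le_height_firstDrop_sub_one : height g a ≤ height g (firstDrop g a - 1) :=
  height_le_of_lt_firstDrop (by have := lt_firstDrop g a; omega) (by omega)

lemma height_firstDrop : height g (firstDrop g a) = height g a - 1 := by
  have := height_firstDrop_lt g a
  have := height_le_height_firstDrop_sub_one g a
  rcases height_sub_one_eq g (firstDrop g a) with h | h <;> omega

lemma firstDrop_notMem : firstDrop g a ∉ g := fun h => by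
  have := height_of_mem h
  have := height_firstDrop_lt g a
  have := height_le_height_firstDrop_sub_one g a
  omega

lemma firstDrop_emod_two : firstDrop g a % 2 = (a + 1) % 2 := by
  have := height_add_emod_two g a
  have := height_add_emod_two g (firstDrop g a)
  have := height_firstDrop g a
  omega

variable {g a}

lemma firstDrop_eq (hab : a < b) (hb : height g b < height g a)
    (hmin : ∀ x, a < x → x < b → height g a ≤ height g x) : firstDrop g a = b :=
  add_one_add_find_eq _ hab hb fun x hax hxb => not_lt.2 (hmin x hax hxb)

lemma firstDrop_ne_of_lt (hab : a < b) (hb : b ∈ g) : firstDrop g b ≠ firstDrop g a := by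
  intro heq
  rcases lt_trichotomy b (firstDrop g a) with hb' | hb' | hb'
  · have := height_le_of_lt_firstDrop (g := g) (show a ≤ b - 1 by omega) (by omega)
    have := height_of_mem hb
    have := height_firstDrop g a
    have := heq ▸ height_firstDrop g b
    omega
  · exact firstDrop_notMem g a (hb' ▸ hb)
  · have := lt_firstDrop g b
    omega

lemma injOn_firstDrop : Set.InjOn (firstDrop g) g := by
  intro a ha b hb heq
  rcases lt_trichotomy a b with h | h | h
  · exact absurd heq.symm (firstDrop_ne_of_lt h hb)
  · exact h
  · exact absurd heq (firstDrop_ne_of_lt h ha)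

/- The up-step at `z + 1`, where `z` is the last point before `x` not above `height g x`,
is matched with `x`. -/
lemma exists_firstDrop_eq (hax : a < x) (hx : x < firstDrop g a) (hxg : x ∉ g) :
    ∃ b ∈ g, a < b ∧ firstDrop g b = x := by
  have hxa : height g a ≤ height g x := height_le_of_lt_firstDrop hax.le hx
  have hx1 : height g (x - 1) = height g x + 1 := by have := height_of_notMem hxg; omega
  set Z := (Icc a (x - 1)).filter (fun y => height g y ≤ height g x)
  have hZ : Z.Nonempty := ⟨a, mem_filter.2 ⟨mem_Icc.2 ⟨le_rfl, by omega⟩, hxa⟩⟩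
  set z := Z.max' hZ
  have hzZ : z ∈ Z := Z.max'_mem hZ
  obtain ⟨hz, hzx⟩ := mem_filter.1 hzZ
  rw [mem_Icc] at hz
  have above : ∀ y, z < y → y ≤ x - 1 → height g x < height g y := fun y hzy hyx => by
    by_contra h
    have := Z.le_max' y (mem_filter.2 ⟨mem_Icc.2 ⟨by omega, hyx⟩, not_lt.1 h⟩)
    omega
  have hzlt : z < x - 1 := lt_of_le_of_ne hz.2 fun h => by rw [h] at hzx; omega
  have hz1 : height g x < height g (z + 1) := above _ (by omega) (by omega)
  have hstep := height_sub_one_eq g (z + 1)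
  rw [add_sub_cancel_right] at hstep
  have hmem : z + 1 ∈ g := by
    by_contra h
    have := height_of_notMem h
    rw [add_sub_cancel_right] at this
    omega
  refine ⟨z + 1, hmem, by omega, firstDrop_eq (by omega) (by omega) fun y hy hyx => ?_⟩
  have := above y (by omega) (by omega)
  omega

end FirstDrop

lemma capEnd_eq_firstDrop {g : Finset ℤ} {a : ℤ} (ha : a ∈ g) :
    capEnd (g ∪ {b ∈ g | a < b}.image (firstDrop g)) a = firstDrop g a := by
  unfold capEnd
  refine add_one_add_find_eq (P := (· ∉ g ∪ {b ∈ g | a < b}.image (firstDrop g))) _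
    (lt_firstDrop g a) ?_ fun x hax hx => ?_
  · simp only [mem_union, mem_image, mem_filter, not_or, not_exists, not_and]
    exact ⟨firstDrop_notMem g a,
      fun b hb heq => absurd (injOn_firstDrop hb.1 ha heq) (by omega)⟩
  · by_cases hxg : x ∈ g
    · exact not_not.2 (mem_union_left _ hxg)
    obtain ⟨b, hb, hab, rfl⟩ := exists_firstDrop_eq hax hx hxg
    exact not_not.2 (mem_union_right _ (mem_image_of_mem _ (mem_filter.2 ⟨hb, hab⟩)))

lemma buildCaps_eq_image (g : Finset ℤ) (l : List ℤ) (hsort : l.Pairwise (· > ·))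
    (hsub : ∀ a ∈ l, a ∈ g) (hbelow : ∀ a ∈ g, a ∉ l → ∀ b ∈ l, b < a) :
    buildCaps g l ({a ∈ g | a ∉ l}.image (firstDrop g)) =
      l.toFinset.image fun a => (a, firstDrop g a) := by
  induction l with
  | nil => simp [buildCaps]
  | cons a l ih =>
    rw [List.pairwise_cons] at hsort
    have ha : a ∈ g := hsub a List.mem_cons_self
    have hal : a ∉ l := fun h => lt_irrefl a (hsort.1 a h)
    have hrest : {b ∈ g | b ∉ a :: l} = {b ∈ g | a < b} := by
      refine filter_congr fun b hb => ⟨fun hbl => hbelow b hb hbl a List.mem_cons_self, ?_⟩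
      intro hab hbl
      rcases List.mem_cons.1 hbl with rfl | hbl
      · exact lt_irrefl _ hab
      · exact lt_asymm hab (hsort.1 b hbl)
    have hused : insert (firstDrop g a) ({b ∈ g | a < b}.image (firstDrop g)) =
        {b ∈ g | b ∉ l}.image (firstDrop g) := by
      rw [← image_insert, ← hrest]
      congr 1
      ext b
      by_cases hba : b = a <;> simp [hba, ha, hal]
    rw [buildCaps, hrest, capEnd_eq_firstDrop ha, hused,
      ih hsort.2 (fun b hb => hsub b (List.mem_cons_of_mem a hb)), List.toFinset_cons, image_insert]
    intro c hc hcl b hbl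
    by_cases hca : c = a
    · exact hca ▸ hsort.1 b hbl
    · exact hbelow c hc (by simp [hca, hcl]) b (List.mem_cons_of_mem a hbl)

lemma Dcap_eq_image (g : Finset ℤ) : Dcap g = g.image fun a => (a, firstDrop g a) := by
  have hsort : (g.sort (· ≤ ·)).reverse.Pairwise (· > ·) :=
    List.pairwise_reverse.2 (sortedLT_sort g).pairwise
  have := buildCaps_eq_image g _ hsort (by simp) fun a ha hna => absurd (by simpa using ha) hna
  rwa [filter_false_of_mem (by simp), image_empty, List.toFinset_reverse, sort_toFinset] at this

lemma mem_flat_iff {f g : Weight} : g ∈ flat f ↔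
    #g = #f ∧ ∀ a ∈ g, (a ∈ f ∧ firstDrop g a ∉ f) ∨ (a ∉ f ∧ firstDrop g a ∈ f) := by
  simp [flat, Matches, Dcap_eq_image]

lemma mem_pSet {r : ℕ} {x : ℤ} : x ∈ pSet r ↔ 2 ≤ x ∧ x ≤ 2 * r ∧ x % 2 = 0 := by
  simp only [pSet, mem_image, mem_Icc]
  constructor
  · rintro ⟨i, hi, rfl⟩
    omega
  · rintro ⟨h1, h2, h3⟩
    exact ⟨x / 2, by omega, by omega⟩

lemma card_pSet (r : ℕ) : #(pSet r) = r := by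
  rw [pSet, card_image_of_injective _ fun x y h => by omega, Int.card_Icc]
  omega

def evenEnd (g : Finset ℤ) (a : ℤ) : ℤ := if a % 2 = 0 then a else firstDrop g a

lemma evenEnd_emod_two (g : Finset ℤ) (a : ℤ) : evenEnd g a % 2 = 0 := by
  have := firstDrop_emod_two g a
  unfold evenEnd
  split_ifs <;> omega

lemma le_evenEnd (g : Finset ℤ) (a : ℤ) : a ≤ evenEnd g a := by
  have := lt_firstDrop g a
  unfold evenEnd
  split_ifs <;> omega

section EvenEnd

variable {g : Finset ℤ} {r : ℕ}

lemma injOn_evenEnd : Set.InjOn (evenEnd g) g := by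
  intro a ha b hb heq
  simp only [evenEnd] at heq
  split_ifs at heq
  · exact heq
  · exact absurd (heq ▸ ha) (firstDrop_notMem g b)
  · exact absurd (heq ▸ hb) (firstDrop_notMem g a)
  · exact injOn_firstDrop ha hb heq

lemma mem_flat_pSet_iff :
    g ∈ flat (pSet r) ↔ #g = r ∧ ∀ a ∈ g, 2 ≤ evenEnd g a ∧ evenEnd g a ≤ 2 * r := by
  rw [mem_flat_iff, card_pSet]
  refine and_congr_right fun _ => forall₂_congr fun a _ => ?_
  have := firstDrop_emod_two g a
  simp only [mem_pSet, evenEnd]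
  split_ifs <;> omega

lemma card_filter_lt_le (hg : ∀ a ∈ g, 2 ≤ evenEnd g a ∧ evenEnd g a ≤ 2 * r) (t : ℤ) :
    #{a ∈ g | 2 * t < a} ≤ (r - t).toNat := by
  calc #{a ∈ g | 2 * t < a}
      ≤ #(Icc (t + 1) (r : ℤ)) := by
        refine card_le_card_of_injOn (fun a => evenEnd g a / 2) (fun a ha => ?_) ?_
        · obtain ⟨hag, hat⟩ := mem_filter.1 ha
          have := hg a hag
          have := le_evenEnd g a
          have := evenEnd_emod_two g a
          simp only [coe_Icc, Set.mem_Icc]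
          omega
        · intro a ha b hb heq
          have := evenEnd_emod_two g a
          have := evenEnd_emod_two g b
          exact injOn_evenEnd (mem_filter.1 ha).1 (mem_filter.1 hb).1 (by simp only at heq; omega)
    _ = (r - t).toNat := by
        rw [Int.card_Icc]
        congr 1
        ring

end EvenEnd

def ballotSets (r : ℕ) : Set (Finset ℤ) :=
  {g | #g = r ∧ g ⊆ Icc 1 (2 * r) ∧ ∀ x : ℤ, 0 ≤ x → x ≤ 2 * r → -1 ≤ height g x}

section Ballot

variable {g : Finset ℤ} {a : ℤ} {r : ℕ}

/- An odd `a < 1` would have its cap over `0`, which is then the even end of a cap starting in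
`(a, 0)`. -/
lemma one_le_of_two_le_evenEnd (hg : ∀ a ∈ g, 2 ≤ evenEnd g a) (ha : a ∈ g) : 1 ≤ a := by
  by_contra! hlt
  have hodd : a % 2 = 1 := by
    have := hg a ha
    unfold evenEnd at this
    split_ifs at this <;> omega
  have hend : 2 ≤ firstDrop g a := by simpa [evenEnd, hodd] using hg a ha
  have h0 : (0 : ℤ) ∉ g := fun h0 => by simpa [evenEnd] using hg 0 h0
  obtain ⟨b, hb, -, hb0⟩ := exists_firstDrop_eq (show a < 0 by omega) (by omega) h0
  have hbodd : b % 2 ≠ 0 := by have := firstDrop_emod_two g b; omega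
  simpa [evenEnd, hbodd, hb0] using hg b hb

lemma height_two_mul_nonneg (hcard : #g = r)
    (hg : ∀ a ∈ g, 2 ≤ evenEnd g a ∧ evenEnd g a ≤ 2 * r) {t : ℤ} (ht : t ≤ r) :
    0 ≤ height g (2 * t) := by
  have hsplit := card_filter_add_card_filter_not (s := g) (· ≤ 2 * t)
  have hupper := card_filter_lt_le hg t
  simp only [not_le] at hsplit
  simp only [height]
  omega

lemma mem_ballotSets_of_mem_flat (h : g ∈ flat (pSet r)) : g ∈ ballotSets r := by
  obtain ⟨hcard, hg⟩ := mem_flat_pSet_iff.1 h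
  refine ⟨hcard, fun a ha => mem_Icc.2 ⟨one_le_of_two_le_evenEnd (fun b hb => (hg b hb).1) ha,
    (le_evenEnd g a).trans (hg a ha).2⟩, fun x hx₀ hx => ?_⟩
  have := height_two_mul_nonneg hcard hg (t := x / 2) (by omega)
  obtain hx2 | hx2 : x = 2 * (x / 2) ∨ x - 1 = 2 * (x / 2) := by omega
  · rw [hx2]
    omega
  · have := height_sub_one_eq g x
    rw [hx2] at this
    omega

lemma height_two_mul_eq_zero (hcard : #g = r) (hsub : g ⊆ Icc 1 (2 * r)) :
    height g (2 * r) = 0 := by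
  rw [height, filter_true_of_mem fun y hy => (mem_Icc.1 (hsub hy)).2, hcard]
  ring

lemma mem_flat_of_mem_ballotSets (h : g ∈ ballotSets r) : g ∈ flat (pSet r) := by
  obtain ⟨hcard, hsub, hheight⟩ := h
  refine mem_flat_pSet_iff.2 ⟨hcard, fun a ha => ?_⟩
  obtain ⟨ha₁, ha₂⟩ := mem_Icc.1 (hsub ha)
  unfold evenEnd
  split_ifs with hpar
  · omega
  have hpos : 1 ≤ height g a := by
    have := height_of_mem ha
    have := hheight (a - 1) (by omega) (by omega)
    have := height_add_emod_two g a
    omega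
  have hend : firstDrop g a ≤ 2 * r := by
    by_contra! hlt
    have := height_le_of_lt_firstDrop ha₂ hlt
    have := height_two_mul_eq_zero hcard hsub
    omega
  have := lt_firstDrop g a
  have := firstDrop_emod_two g a
  omega

lemma flat_pSet_eq_ballotSets (r : ℕ) : flat (pSet r) = ballotSets r :=
  Set.ext fun _ => ⟨mem_ballotSets_of_mem_flat, mem_flat_of_mem_ballotSets⟩

end Ballot

open DyckStep

lemma count_U_add_count_D (l : List DyckStep) : l.count U + l.count D = l.length := by
  induction l with
  | nil => rfl
  | cons s l ih => cases s <;> simp <;> omega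

/- Step `j` (counting from `0`) is an up-step iff `j + 1 ∈ s`, so `stepsOf s n` records the
points `1, …, n`. -/
def stepsOf (s : Finset ℤ) (n : ℕ) : List DyckStep :=
  (List.range n).map fun j : ℕ => if (j + 1 : ℤ) ∈ s then U else D

noncomputable def positionsOf (l : List DyckStep) : Finset ℤ :=
  {x ∈ Icc 1 (l.length : ℤ) | l[(x - 1).toNat]? = some U}

section Steps

variable {s : Finset ℤ} {n i : ℕ}

@[simp]
lemma length_stepsOf : (stepsOf s n).length = n := by simp [stepsOf]

lemma take_stepsOf (hi : i ≤ n) : (stepsOf s n).take i = stepsOf s i := by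
  rw [stepsOf, ← List.map_take, List.take_range, min_eq_left hi, stepsOf]

lemma count_U_stepsOf (hs : ∀ a ∈ s, 1 ≤ a) :
    (stepsOf s n).count U = #{a ∈ s | a ≤ (n : ℤ)} := by
  induction n with
  | zero =>
    rw [stepsOf, List.range_zero, List.map_nil, List.count_nil, eq_comm, card_eq_zero,
      filter_eq_empty_iff]
    exact fun a ha => by have := hs a ha; push_cast; omega
  | succ n ih =>
    rw [stepsOf, List.range_succ, List.map_append, List.count_append, ← stepsOf, ih,
      card_filter_le_eq_sub_one_add s (n + 1 : ℕ)]
    push_cast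
    simp only [add_sub_cancel_right]
    split_ifs <;> simp [*]

lemma stepsOf_positionsOf (l : List DyckStep) : stepsOf (positionsOf l) l.length = l := by
  refine List.ext_getElem (by simp) fun j hj hj' => ?_
  have hmem : (j + 1 : ℤ) ∈ positionsOf l ↔ l[j] = U := by simp [positionsOf, hj']
  simp only [stepsOf, List.getElem_map, List.getElem_range]
  split_ifs with h
  · exact (hmem.1 h).symm
  · exact ((l[j]).dichotomy.resolve_left (mt hmem.2 h)).symm

lemma positionsOf_subset (l : List DyckStep) : positionsOf l ⊆ Icc 1 (l.length : ℤ) :=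
  filter_subset _ _

lemma positionsOf_stepsOf (hs : s ⊆ Icc 1 (n : ℤ)) : positionsOf (stepsOf s n) = s := by
  ext x
  by_cases hx : 1 ≤ x ∧ x ≤ n
  · have hk : (x - 1).toNat < n := by omega
    simp only [positionsOf, length_stepsOf, mem_filter, mem_Icc, hx, and_self, true_and]
    simp only [stepsOf, List.getElem?_map, List.getElem?_range hk, Option.map_some,
      Option.some.injEq, show ((x - 1).toNat : ℤ) + 1 = x by omega]
    split_ifs with h <;> simp [h]
  · refine iff_of_false (fun h => hx ?_) (fun h => hx (mem_Icc.1 (hs h)))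
    simpa using (mem_filter.1 h).1

lemma height_eq_count_sub_count (hs : ∀ a ∈ s, 1 ≤ a) (hi : i ≤ n) :
    height s i = ((stepsOf s n).take i).count U - ((stepsOf s n).take i).count D := by
  rw [take_stepsOf hi]
  have := count_U_add_count_D (stepsOf s i)
  rw [length_stepsOf, count_U_stepsOf hs] at this
  rw [count_U_stepsOf hs]
  simp only [height]
  omega

end Steps

def IsBallot (l : List DyckStep) : Prop :=
  l.count U = l.count D ∧ ∀ i, (l.take i).count D ≤ (l.take i).count U + 1

lemma two_mul_count_U_of_isBallot {l : List DyckStep} (hl : IsBallot l) :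
    2 * l.count U = l.length := by
  have := count_U_add_count_D l
  have := hl.1
  omega

lemma mem_ballotSets_iff_isBallot {s : Finset ℤ} {r : ℕ} (hs : s ⊆ Icc 1 (2 * r : ℤ)) :
    s ∈ ballotSets r ↔ IsBallot (stepsOf s (2 * r)) := by
  have hpos : ∀ a ∈ s, 1 ≤ a := fun a ha => (mem_Icc.1 (hs ha)).1
  have hU : (stepsOf s (2 * r)).count U = #s := by
    rw [count_U_stepsOf hpos,
      filter_true_of_mem fun a ha => by exact_mod_cast (mem_Icc.1 (hs ha)).2]
  have hUD := count_U_add_count_D (stepsOf s (2 * r))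
  rw [length_stepsOf] at hUD
  have hstep : ∀ i ≤ 2 * r, (-1 ≤ height s i ↔ ((stepsOf s (2 * r)).take i).count D ≤
      ((stepsOf s (2 * r)).take i).count U + 1) := fun i hi => by
    rw [height_eq_count_sub_count hpos hi]
    omega
  constructor
  · rintro ⟨hcard, -, hheight⟩
    refine ⟨by omega, fun i => ?_⟩
    rcases le_or_gt i (2 * r) with hi | hi
    · exact (hstep i hi).1 (hheight i (by omega) (by exact_mod_cast hi))
    · rw [List.take_of_length_le (by simp; omega)]
      omega
  · rintro ⟨hcount, hpre⟩
    refine ⟨by omega, hs, fun x hx₀ hx => ?_⟩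
    lift x to ℕ using hx₀
    exact (hstep x (by exact_mod_cast hx)).2 (hpre x)

noncomputable def ballotSetsEquiv (r : ℕ) :
    ballotSets r ≃ {l : List DyckStep // IsBallot l ∧ l.length = 2 * r} where
  toFun g := ⟨stepsOf g (2 * r), (mem_ballotSets_iff_isBallot g.2.2.1).1 g.2, length_stepsOf⟩
  invFun l := ⟨positionsOf l, by
    have hsub : positionsOf l ⊆ Icc 1 (2 * r : ℤ) := by
      simpa [l.2.2] using positionsOf_subset l.1
    have hsteps := stepsOf_positionsOf l.1
    rw [l.2.2] at hsteps
    rw [mem_ballotSets_iff_isBallot hsub, hsteps]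
    exact l.2.1⟩
  left_inv g := Subtype.ext (positionsOf_stepsOf (by exact_mod_cast g.2.2.1))
  right_inv l := Subtype.ext (by simpa only [l.2.2] using stepsOf_positionsOf l.1)

lemma count_cons_append (l : List DyckStep) :
    (U :: l ++ [D]).count U = l.count U + 1 ∧ (U :: l ++ [D]).count D = l.count D + 1 := by
  simp

lemma count_take_succ_cons_append (l : List DyckStep) (i : ℕ) :
    ((U :: l ++ [D]).take (i + 1)).count U = (l.take i).count U + 1 ∧
      ((U :: l ++ [D]).take (i + 1)).count D =
        (l.take i).count D + if l.length < i then 1 else 0 := by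
  rw [List.cons_append, List.take_succ_cons, List.take_append]
  rcases le_or_gt i l.length with hi | hi
  · simp [Nat.sub_eq_zero_of_le hi, hi.not_gt]
  · obtain ⟨k, hk⟩ : ∃ k, i - l.length = k + 1 := ⟨i - l.length - 1, by omega⟩
    simp [hk, hi]

lemma isBallot_iff_cons_append (l : List DyckStep) :
    IsBallot l ↔ (U :: l ++ [D]).count U = (U :: l ++ [D]).count D ∧
      ∀ i, ((U :: l ++ [D]).take i).count D ≤ ((U :: l ++ [D]).take i).count U := by
  rw [IsBallot, (count_cons_append l).1, (count_cons_append l).2, add_left_inj]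
  refine and_congr_right fun hl => ⟨fun h i => ?_, fun h i => ?_⟩
  · obtain _ | i := i
    · simp
    obtain ⟨hU, hD⟩ := count_take_succ_cons_append l i
    have := h i
    split_ifs at hD with hi
    · rw [List.take_of_length_le hi.le] at hU hD
      omega
    · omega
  · obtain ⟨hU, hD⟩ := count_take_succ_cons_append l i
    have := h (i + 1)
    split_ifs at hD <;> omega

lemma isBallot_dropLast_tail {p : DyckWord} (hp : p ≠ 0) : IsBallot p.toList.dropLast.tail := by
  rw [isBallot_iff_cons_append, DyckWord.cons_tail_dropLast_concat hp]
  exact ⟨p.count_U_eq_count_D, p.count_D_le_count_U⟩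

lemma _root_.DyckWord.ne_zero_of_semilength_ne_zero {p : DyckWord} (hp : p.semilength ≠ 0) :
    p ≠ 0 := by
  rintro rfl
  exact hp rfl

def nestEquiv (n : ℕ) :
    {l : List DyckStep // IsBallot l ∧ l.length = 2 * n} ≃ {p : DyckWord // p.semilength = n + 1}
    where
  toFun l := ⟨⟨U :: l.1 ++ [D], ((isBallot_iff_cons_append l.1).1 l.2.1).1,
      ((isBallot_iff_cons_append l.1).1 l.2.1).2⟩, by
    have := two_mul_count_U_of_isBallot l.2.1
    rw [DyckWord.semilength, (count_cons_append l.1).1]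
    omega⟩
  invFun p := ⟨p.1.toList.dropLast.tail,
    isBallot_dropLast_tail (DyckWord.ne_zero_of_semilength_ne_zero (by simp [p.2])), by
    have := p.1.two_mul_semilength_eq_length
    rw [p.2] at this
    simp only [List.length_tail, List.length_dropLast]
    omega⟩
  left_inv l := Subtype.ext <| show (U :: l.1 ++ [D]).dropLast.tail = l.1 by
    rw [List.dropLast_concat, List.tail_cons]
  right_inv p := Subtype.ext <| DyckWord.ext <|
    DyckWord.cons_tail_dropLast_concat (DyckWord.ne_zero_of_semilength_ne_zero (by simp [p.2]))

theorem flat_pSet_card_general (r : ℕ) :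
    (flat (pSet r)).ncard = catalan (r + 1) := by
  rw [flat_pSet_eq_ballotSets, ← Nat.card_coe_set_eq,
    Nat.card_congr ((ballotSetsEquiv r).trans (nestEquiv r)), Nat.card_eq_fintype_card,
    DyckWord.card_dyckWord_semilength_eq_catalan]

/-- For `p = (2, 4, …, 2r)` with `r ≥ 1`, `|♭p| = C_{r+1}`. -/
theorem flat_pSet_card (r : ℕ) (hr : 1 ≤ r) :
    (flat (pSet r)).ncard = catalan (r + 1) :=
  flat_pSet_card_general r

end KacCatalan
end
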